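/- Let M be a finite-dimensional real vector space regarded as a manifold via its identity chart, and let A, B, C be smooth sections of T ⊕ T*. Then the Jacobiator of the Courant bracket, Jac(A,B,C) = [[A,B],C] + [[B,C],A] + [[C,A],B], is the exact 1-form given by the derivative of the Nijenhuis operator: Jac(A,B,C) = d(Nij(A,B,C)), where Nij(A,B,C) = (1/3)(⟨[A,B],C⟩ + ⟨[B,C],A⟩ + ⟨[C,A],B⟩). -/

import Mathlib

noncomputable section

variable {E : Type*} [NormedAddCommGroup E] [NormedSpace ℝ E]

/-- The Lie bracket of vector fields on the vector space `E`,
`[X,Y] = DY·X − DX·Y`. -/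
def lieVF (X Y : E → E) : E → E :=
  fun x => fderiv ℝ Y x (X x) - fderiv ℝ X x (Y x)

/-- The Lie derivative of a 1-form along a vector field,
`L_X η = i_X dη + d(η(X))`, where `dη(u,v) = (Dη·u)(v) − (Dη·v)(u)`. -/
def lieD (X : E → E) (η : E → E →L[ℝ] ℝ) : E → E →L[ℝ] ℝ :=
  fun x => (fderiv ℝ η x (X x) - (fderiv ℝ η x).flip (X x)) +
    fderiv ℝ (fun y => η y (X y)) x

/-- The pointwise inner product of sections of `T ⊕ T*`:
`⟨X+ξ, Y+η⟩ = (1/2)(ξ(Y) + η(X))`. -/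
def secIP (A B : (E → E) × (E → E →L[ℝ] ℝ)) : E → ℝ :=
  fun x => (A.2 x (B.1 x) + B.2 x (A.1 x)) / 2

/-- The Courant bracket of sections of `T ⊕ T*`:
`[X+ξ, Y+η] = [X,Y] + L_X η − L_Y ξ − (1/2) d(i_X η − i_Y ξ)`. -/
def courant (A B : (E → E) × (E → E →L[ℝ] ℝ)) :
    (E → E) × (E → E →L[ℝ] ℝ) :=
  (lieVF A.1 B.1,
   fun x => lieD A.1 B.2 x - lieD B.1 A.2 x -
     (2 : ℝ)⁻¹ • fderiv ℝ (fun y => B.2 y (A.1 y) - A.2 y (B.1 y)) x)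

/-- A section of `T ⊕ T*` is smooth if both its components are. -/
def SmoothSec (A : (E → E) × (E → E →L[ℝ] ℝ)) : Prop :=
  ContDiff ℝ (⊤ : ℕ∞) A.1 ∧ ContDiff ℝ (⊤ : ℕ∞) A.2

/-- The Nijenhuis operator
`Nij(A,B,C) = (1/3)(⟨[A,B],C⟩ + ⟨[B,C],A⟩ + ⟨[C,A],B⟩)`. -/
def nij (A B C : (E → E) × (E → E →L[ℝ] ℝ)) : E → ℝ :=
  fun x => (1 / 3 : ℝ) *
    (secIP (courant A B) C x + secIP (courant B C) A x + secIP (courant C A) B x)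

namespace CourantAux

variable {F G F' : Type*}
  [NormedAddCommGroup F] [NormedSpace ℝ F] [NormedAddCommGroup G] [NormedSpace ℝ G]
  [NormedAddCommGroup F'] [NormedSpace ℝ F']

lemma cdiff {f : E → F} (hf : ContDiff ℝ (⊤ : ℕ∞) f) (x : E) : DifferentiableAt ℝ f x :=
  hf.differentiable (by simp) x

lemma smooth_fd {f : E → F} (hf : ContDiff ℝ (⊤ : ℕ∞) f) : ContDiff ℝ (⊤ : ℕ∞) (fderiv ℝ f) :=
  hf.fderiv_right (by simp)

lemma sym2 {f : E → F} (hf : ContDiff ℝ (⊤ : ℕ∞) f) (x u w : E) :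
    fderiv ℝ (fderiv ℝ f) x u w = fderiv ℝ (fderiv ℝ f) x w u :=
  (hf.contDiffAt.isSymmSndFDerivAt (by simp only [minSmoothness_of_isRCLikeNormedField]; exact WithTop.coe_le_coe.mpr le_top)) u w

lemma sym2' {f : E → E →L[ℝ] ℝ} (hf : ContDiff ℝ (⊤ : ℕ∞) f) (x u w e : E) :
    fderiv ℝ (fderiv ℝ f) x u w e = fderiv ℝ (fderiv ℝ f) x w u e := by
  rw [sym2 hf x u w]

lemma fderiv_capp (c : E → F →L[ℝ] G) {u : E → F} {x : E} (hc : DifferentiableAt ℝ c x)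
    (hu : DifferentiableAt ℝ u x) (v : E) :
    fderiv ℝ (fun y => c y (u y)) x v = fderiv ℝ c x v (u x) + c x (fderiv ℝ u x v) := by
  rw [fderiv_clm_apply hc hu]
  simp [ContinuousLinearMap.add_apply]
  abel

lemma fderiv_capp_const (c : E → F →L[ℝ] G) {x : E} (hc : DifferentiableAt ℝ c x)
    (w : F) (v : E) :
    fderiv ℝ (fun y => c y w) x v = fderiv ℝ c x v w := by
  rw [fderiv_clm_apply hc (differentiableAt_const w)]
  simp

lemma contDiff_flip (c : E → F →L[ℝ] (F' →L[ℝ] G)) (hc : ContDiff ℝ (⊤ : ℕ∞) c) :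
    ContDiff ℝ (⊤ : ℕ∞) fun y => (c y).flip := by
  have h : ContDiff ℝ (⊤ : ℕ∞) (⇑((ContinuousLinearMap.flipₗᵢ ℝ F F' G).toContinuousLinearEquiv.toContinuousLinearMap) ∘ c) :=
    (ContinuousLinearMap.contDiff _).comp hc
  exact h

lemma fdSub {f g : E → F} {x : E} (hf : DifferentiableAt ℝ f x)
    (hg : DifferentiableAt ℝ g x) (v : E) :
    fderiv ℝ (fun y => f y - g y) x v = fderiv ℝ f x v - fderiv ℝ g x v := by
  rw [fderiv_fun_sub hf hg]; rfl

lemma fdAdd {f g : E → F} {x : E} (hf : DifferentiableAt ℝ f x)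
    (hg : DifferentiableAt ℝ g x) (v : E) :
    fderiv ℝ (fun y => f y + g y) x v = fderiv ℝ f x v + fderiv ℝ g x v := by
  rw [fderiv_fun_add hf hg]; rfl

lemma fdCMul {f : E → ℝ} {x : E} (hf : DifferentiableAt ℝ f x) (c : ℝ) (v : E) :
    fderiv ℝ (fun y => c * f y) x v = c * fderiv ℝ f x v := by
  rw [fderiv_const_mul hf c]; simp

/-- derivative of `y ↦ c y (u y) w`. -/
lemma K4' (c : E → F →L[ℝ] (F' →L[ℝ] G)) (u : E → F) (hc : ContDiff ℝ (⊤ : ℕ∞) c)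
    (hu : ContDiff ℝ (⊤ : ℕ∞) u) (x v : E) (w : F') :
    fderiv ℝ (fun y => c y (u y) w) x v =
      fderiv ℝ c x v (u x) w + c x (fderiv ℝ u x v) w := by
  have h1 : DifferentiableAt ℝ (fun y => c y (u y)) x := cdiff (hc.clm_apply hu) x
  rw [fderiv_capp_const _ h1 w v, fderiv_capp c (cdiff hc x) (cdiff hu x) v,
    ContinuousLinearMap.add_apply]

/-- derivative of `y ↦ c y (g y w)`. -/
lemma K5' (c : E → F →L[ℝ] G) (g : E → F' →L[ℝ] F) (hc : ContDiff ℝ (⊤ : ℕ∞) c)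
    (hg : ContDiff ℝ (⊤ : ℕ∞) g) (x v : E) (w : F') :
    fderiv ℝ (fun y => c y (g y w)) x v =
      fderiv ℝ c x v (g x w) + c x (fderiv ℝ g x v w) := by
  have h1 : DifferentiableAt ℝ (fun y => g y w) x := cdiff (hg.clm_apply contDiff_const) x
  rw [fderiv_capp c (cdiff hc x) h1 v, fderiv_capp_const g (cdiff hg x) w v]

/-- derivative of `y ↦ c y w (u y)`. -/
lemma K6' (c : E → F' →L[ℝ] (F →L[ℝ] G)) (u : E → F) (hc : ContDiff ℝ (⊤ : ℕ∞) c)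
    (hu : ContDiff ℝ (⊤ : ℕ∞) u) (x v : E) (w : F') :
    fderiv ℝ (fun y => c y w (u y)) x v =
      fderiv ℝ c x v w (u x) + c x w (fderiv ℝ u x v) := by
  have h1 : DifferentiableAt ℝ (fun y => c y w) x := cdiff (hc.clm_apply contDiff_const) x
  rw [fderiv_capp _ h1 (cdiff hu x) v, fderiv_capp_const c (cdiff hc x) w v]

-- continuing inside namespace CourantAux (appended to w1 content for testing)
variable (A B : (E → E) × (E → E →L[ℝ] ℝ))

def KAP (A B : (E → E) × (E → E →L[ℝ] ℝ)) : E → E →L[ℝ] ℝ := fun y =>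
  fderiv ℝ B.2 y (A.1 y) - fderiv ℝ A.2 y (B.1 y)
  + (2:ℝ)⁻¹ • ((B.2 y).comp (fderiv ℝ A.1 y) - (A.2 y).comp (fderiv ℝ B.1 y))
  - (2:ℝ)⁻¹ • ((fderiv ℝ B.2 y).flip (A.1 y) - (fderiv ℝ A.2 y).flip (B.1 y))

variable {A B}

lemma smooth_lieVF {X Y : E → E} (hX : ContDiff ℝ (⊤ : ℕ∞) X) (hY : ContDiff ℝ (⊤ : ℕ∞) Y) :
    ContDiff ℝ (⊤ : ℕ∞) (lieVF X Y) :=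
  ((smooth_fd hY).clm_apply hX).sub ((smooth_fd hX).clm_apply hY)

lemma smooth_KAP (hA : SmoothSec A) (hB : SmoothSec B) : ContDiff ℝ (⊤ : ℕ∞) (KAP A B) := by
  obtain ⟨hX, hξ⟩ := hA; obtain ⟨hY, hη⟩ := hB
  refine ContDiff.sub (ContDiff.add (ContDiff.sub ?_ ?_) (ContDiff.const_smul _ (ContDiff.sub ?_ ?_)))
    (ContDiff.const_smul _ (ContDiff.sub ?_ ?_))
  · exact (smooth_fd hη).clm_apply hX
  · exact (smooth_fd hξ).clm_apply hY
  · exact hη.clm_comp (smooth_fd hX)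
  · exact hξ.clm_comp (smooth_fd hY)
  · exact (contDiff_flip _ (smooth_fd hη)).clm_apply hX
  · exact (contDiff_flip _ (smooth_fd hξ)).clm_apply hY

lemma courant_fst : (courant A B).1 = lieVF A.1 B.1 := rfl

lemma lieVF_apply (X Y : E → E) (x : E) :
    lieVF X Y x = fderiv ℝ Y x (X x) - fderiv ℝ X x (Y x) := rfl

lemma courant_snd_eq (hA : SmoothSec A) (hB : SmoothSec B) : (courant A B).2 = KAP A B := by
  funext x
  show lieD A.1 B.2 x - lieD B.1 A.2 x -
      (2 : ℝ)⁻¹ • fderiv ℝ (fun y => B.2 y (A.1 y) - A.2 y (B.1 y)) x = KAP A B x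
  have h1 : DifferentiableAt ℝ (fun y => B.2 y (A.1 y)) x := cdiff (hB.2.clm_apply hA.1) x
  have h2 : DifferentiableAt ℝ (fun y => A.2 y (B.1 y)) x := cdiff (hA.2.clm_apply hB.1) x
  unfold lieD KAP
  rw [fderiv_fun_sub h1 h2, fderiv_clm_apply (cdiff hB.2 x) (cdiff hA.1 x),
    fderiv_clm_apply (cdiff hA.2 x) (cdiff hB.1 x)]
  module

lemma smooth_courant (hA : SmoothSec A) (hB : SmoothSec B) : SmoothSec (courant A B) := by
  constructor
  · exact smooth_lieVF hA.1 hB.1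
  · rw [courant_snd_eq hA hB]; exact smooth_KAP hA hB

/-- L0 : pointwise scalar form of the second component of the Courant bracket. -/
lemma courant_snd_apply (hA : SmoothSec A) (hB : SmoothSec B) (x v : E) :
    (courant A B).2 x v =
      fderiv ℝ B.2 x (A.1 x) v - fderiv ℝ A.2 x (B.1 x) v
      + (2:ℝ)⁻¹ * (B.2 x (fderiv ℝ A.1 x v) - A.2 x (fderiv ℝ B.1 x v))
      - (2:ℝ)⁻¹ * (fderiv ℝ B.2 x v (A.1 x) - fderiv ℝ A.2 x v (B.1 x)) := by
  rw [courant_snd_eq hA hB]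
  unfold KAP
  simp [ContinuousLinearMap.sub_apply, ContinuousLinearMap.add_apply,
    ContinuousLinearMap.smul_apply, ContinuousLinearMap.comp_apply,
    ContinuousLinearMap.flip_apply, smul_eq_mul]

variable {C : (E → E) × (E → E →L[ℝ] ℝ)}

/-- V1 : derivative of the Lie bracket of vector fields. -/
lemma fderiv_lieVF {X Y : E → E} (hX : ContDiff ℝ (⊤ : ℕ∞) X) (hY : ContDiff ℝ (⊤ : ℕ∞) Y) (x v : E) :
    fderiv ℝ (lieVF X Y) x v =
      fderiv ℝ (fderiv ℝ Y) x v (X x) + fderiv ℝ Y x (fderiv ℝ X x v)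
      - fderiv ℝ (fderiv ℝ X) x v (Y x) - fderiv ℝ X x (fderiv ℝ Y x v) := by
  have h1 : DifferentiableAt ℝ (fun y => fderiv ℝ Y y (X y)) x :=
    cdiff ((smooth_fd hY).clm_apply hX) x
  have h2 : DifferentiableAt ℝ (fun y => fderiv ℝ X y (Y y)) x :=
    cdiff ((smooth_fd hX).clm_apply hY) x
  unfold lieVF
  rw [fdSub h1 h2, fderiv_capp _ (cdiff (smooth_fd hY) x) (cdiff hX x),
    fderiv_capp _ (cdiff (smooth_fd hX) x) (cdiff hY x)]
  abel

/-- K3 : derivative of the second component of the Courant bracket. -/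
lemma fderiv_courant_snd (hA : SmoothSec A) (hB : SmoothSec B) (x d e : E) :
    fderiv ℝ (courant A B).2 x d e =
      fderiv ℝ (fderiv ℝ B.2) x d (A.1 x) e + fderiv ℝ B.2 x (fderiv ℝ A.1 x d) e
      - fderiv ℝ (fderiv ℝ A.2) x d (B.1 x) e - fderiv ℝ A.2 x (fderiv ℝ B.1 x d) e
      + (2:ℝ)⁻¹ * (fderiv ℝ B.2 x d (fderiv ℝ A.1 x e) + B.2 x (fderiv ℝ (fderiv ℝ A.1) x d e)
          - fderiv ℝ A.2 x d (fderiv ℝ B.1 x e) - A.2 x (fderiv ℝ (fderiv ℝ B.1) x d e))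
      - (2:ℝ)⁻¹ * (fderiv ℝ (fderiv ℝ B.2) x d e (A.1 x) + fderiv ℝ B.2 x e (fderiv ℝ A.1 x d)
          - fderiv ℝ (fderiv ℝ A.2) x d e (B.1 x) - fderiv ℝ A.2 x e (fderiv ℝ B.1 x d)) := by
  obtain ⟨hX, hξ⟩ := id hA; obtain ⟨hY, hη⟩ := id hB
  rw [courant_snd_eq hA hB]
  rw [← fderiv_capp_const (KAP A B) (cdiff (smooth_KAP hA hB) x) e d]
  have hfn : (fun y => KAP A B y e) = fun y =>
      ((fderiv ℝ B.2 y (A.1 y) e - fderiv ℝ A.2 y (B.1 y) e)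
      + (2:ℝ)⁻¹ * (B.2 y (fderiv ℝ A.1 y e) - A.2 y (fderiv ℝ B.1 y e)))
      - (2:ℝ)⁻¹ * (fderiv ℝ B.2 y e (A.1 y) - fderiv ℝ A.2 y e (B.1 y)) := by
    funext y
    unfold KAP
    simp [ContinuousLinearMap.sub_apply, ContinuousLinearMap.add_apply,
      ContinuousLinearMap.smul_apply, ContinuousLinearMap.comp_apply,
      ContinuousLinearMap.flip_apply, smul_eq_mul]
  rw [hfn]
  have d1 : DifferentiableAt ℝ (fun y => fderiv ℝ B.2 y (A.1 y) e) x :=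
    cdiff (((smooth_fd hη).clm_apply hX).clm_apply contDiff_const) x
  have d2 : DifferentiableAt ℝ (fun y => fderiv ℝ A.2 y (B.1 y) e) x :=
    cdiff (((smooth_fd hξ).clm_apply hY).clm_apply contDiff_const) x
  have d3 : DifferentiableAt ℝ (fun y => B.2 y (fderiv ℝ A.1 y e)) x :=
    cdiff (hη.clm_apply ((smooth_fd hX).clm_apply contDiff_const)) x
  have d4 : DifferentiableAt ℝ (fun y => A.2 y (fderiv ℝ B.1 y e)) x :=
    cdiff (hξ.clm_apply ((smooth_fd hY).clm_apply contDiff_const)) x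
  have d5 : DifferentiableAt ℝ (fun y => fderiv ℝ B.2 y e (A.1 y)) x :=
    cdiff (((smooth_fd hη).clm_apply contDiff_const).clm_apply hX) x
  have d6 : DifferentiableAt ℝ (fun y => fderiv ℝ A.2 y e (B.1 y)) x :=
    cdiff (((smooth_fd hξ).clm_apply contDiff_const).clm_apply hY) x
  rw [fdSub ((d1.fun_sub d2).fun_add ((d3.fun_sub d4).const_mul _)) ((d5.fun_sub d6).const_mul _),
    fdAdd (d1.fun_sub d2) ((d3.fun_sub d4).const_mul _),
    fdSub d1 d2, fdCMul (d3.fun_sub d4), fdSub d3 d4,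
    fdCMul (d5.fun_sub d6), fdSub d5 d6,
    K4' (fderiv ℝ B.2) A.1 (smooth_fd hη) hX x d e,
    K4' (fderiv ℝ A.2) B.1 (smooth_fd hξ) hY x d e,
    K5' B.2 (fderiv ℝ A.1) hη (smooth_fd hX) x d e,
    K5' A.2 (fderiv ℝ B.1) hξ (smooth_fd hY) x d e,
    K6' (fderiv ℝ B.2) A.1 (smooth_fd hη) hX x d e,
    K6' (fderiv ℝ A.2) B.1 (smooth_fd hξ) hY x d e]
  ring

/-- Derivative of `secIP (courant A B) C`. -/
lemma fderiv_secIP (hA : SmoothSec A) (hB : SmoothSec B) (hC : SmoothSec C) (x v : E) :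
    fderiv ℝ (secIP (courant A B) C) x v =
      (2:ℝ)⁻¹ * (fderiv ℝ (courant A B).2 x v (C.1 x) + (courant A B).2 x (fderiv ℝ C.1 x v)
        + fderiv ℝ C.2 x v (lieVF A.1 B.1 x) + C.2 x (fderiv ℝ (lieVF A.1 B.1) x v)) := by
  have hP := smooth_courant hA hB
  have hW : ContDiff ℝ (⊤ : ℕ∞) (lieVF A.1 B.1) := smooth_lieVF hA.1 hB.1
  have hfn : secIP (courant A B) C =
      fun y => (2:ℝ)⁻¹ * ((courant A B).2 y (C.1 y) + C.2 y (lieVF A.1 B.1 y)) := by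
    funext y
    show ((courant A B).2 y (C.1 y) + C.2 y ((courant A B).1 y)) / 2 = _
    rw [courant_fst]; ring
  have d1 : DifferentiableAt ℝ (fun y => (courant A B).2 y (C.1 y)) x :=
    cdiff (hP.2.clm_apply hC.1) x
  have d2 : DifferentiableAt ℝ (fun y => C.2 y (lieVF A.1 B.1 y)) x :=
    cdiff (hC.2.clm_apply hW) x
  rw [hfn, fdCMul (d1.fun_add d2), fdAdd d1 d2,
    fderiv_capp _ (cdiff hP.2 x) (cdiff hC.1 x), fderiv_capp _ (cdiff hC.2 x) (cdiff hW x)]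
  ring

lemma smooth_secIP {P : (E → E) × (E → E →L[ℝ] ℝ)} (hP : SmoothSec P) (hC : SmoothSec C) :
    ContDiff ℝ (⊤ : ℕ∞) (secIP P C) :=
  ((hP.2.clm_apply hC.1).add (hC.2.clm_apply hP.1)).div_const 2

end CourantAux

open CourantAux in
/-- The Jacobiator of the Courant bracket is the exact 1-form `d(Nij(A,B,C))`. -/
theorem courant_jacobiator_eq_d_nij
    [FiniteDimensional ℝ E]
    (A B C : (E → E) × (E → E →L[ℝ] ℝ))
    (hA : SmoothSec A) (hB : SmoothSec B) (hC : SmoothSec C) :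
    courant (courant A B) C + courant (courant B C) A + courant (courant C A) B =
      ((fun _ => (0 : E)), fun x => fderiv ℝ (nij A B C) x) := by
  have hAB := smooth_courant hA hB
  have hBC := smooth_courant hB hC
  have hCA := smooth_courant hC hA
  refine Prod.ext ?_ ?_
  · -- first components: Jacobi identity for the Lie bracket of vector fields
    funext x
    show (courant (courant A B) C).1 x + (courant (courant B C) A).1 x
        + (courant (courant C A) B).1 x = 0
    simp only [courant_fst]
    rw [lieVF_apply (lieVF A.1 B.1) C.1 x, lieVF_apply (lieVF B.1 C.1) A.1 x,
      lieVF_apply (lieVF C.1 A.1) B.1 x,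
      fderiv_lieVF hA.1 hB.1 x (C.1 x), fderiv_lieVF hB.1 hC.1 x (A.1 x),
      fderiv_lieVF hC.1 hA.1 x (B.1 x),
      lieVF_apply A.1 B.1 x, lieVF_apply B.1 C.1 x, lieVF_apply C.1 A.1 x]
    simp only [map_sub]
    rw [sym2 hB.1 x (C.1 x) (A.1 x), sym2 hA.1 x (C.1 x) (B.1 x), sym2 hC.1 x (A.1 x) (B.1 x)]
    abel
  · -- second components
    funext x
    apply ContinuousLinearMap.ext; intro v
    show (courant (courant A B) C).2 x v + (courant (courant B C) A).2 x v
        + (courant (courant C A) B).2 x v = fderiv ℝ (nij A B C) x v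
    -- expand the right-hand side
    have ds1 : DifferentiableAt ℝ (secIP (courant A B) C) x := cdiff (smooth_secIP hAB hC) x
    have ds2 : DifferentiableAt ℝ (secIP (courant B C) A) x := cdiff (smooth_secIP hBC hA) x
    have ds3 : DifferentiableAt ℝ (secIP (courant C A) B) x := cdiff (smooth_secIP hCA hB) x
    have hR : fderiv ℝ (nij A B C) x v =
        (1/3 : ℝ) * (fderiv ℝ (secIP (courant A B) C) x v
          + fderiv ℝ (secIP (courant B C) A) x v + fderiv ℝ (secIP (courant C A) B) x v) := by
      unfold nij
      rw [fdCMul ((ds1.fun_add ds2).fun_add ds3), fdAdd (ds1.fun_add ds2) ds3,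
        fdAdd ds1 ds2]
    rw [hR, fderiv_secIP hA hB hC x v, fderiv_secIP hB hC hA x v, fderiv_secIP hC hA hB x v]
    -- expand the double brackets
    rw [courant_snd_apply hAB hC x v, courant_snd_apply hBC hA x v, courant_snd_apply hCA hB x v]
    simp only [courant_fst]
    -- inner expansions
    rw [fderiv_courant_snd hA hB x (C.1 x) v, fderiv_courant_snd hA hB x v (C.1 x),
      fderiv_courant_snd hB hC x (A.1 x) v, fderiv_courant_snd hB hC x v (A.1 x),
      fderiv_courant_snd hC hA x (B.1 x) v, fderiv_courant_snd hC hA x v (B.1 x)]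
    rw [courant_snd_apply hA hB x (fderiv ℝ C.1 x v),
      courant_snd_apply hB hC x (fderiv ℝ A.1 x v),
      courant_snd_apply hC hA x (fderiv ℝ B.1 x v)]
    rw [fderiv_lieVF hA.1 hB.1 x v, fderiv_lieVF hB.1 hC.1 x v, fderiv_lieVF hC.1 hA.1 x v]
    rw [lieVF_apply A.1 B.1 x, lieVF_apply B.1 C.1 x, lieVF_apply C.1 A.1 x]
    simp only [map_sub, map_add, ContinuousLinearMap.sub_apply, ContinuousLinearMap.add_apply]
    -- canonicalize second derivatives using symmetry
    simp only [sym2 hA.1 x (A.1 x) v, sym2 hA.1 x (B.1 x) v, sym2 hA.1 x (C.1 x) v,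
      sym2 hB.1 x (A.1 x) v, sym2 hB.1 x (B.1 x) v, sym2 hB.1 x (C.1 x) v,
      sym2 hC.1 x (A.1 x) v, sym2 hC.1 x (B.1 x) v, sym2 hC.1 x (C.1 x) v,
      sym2 hA.1 x (C.1 x) (A.1 x), sym2 hA.1 x (C.1 x) (B.1 x), sym2 hA.1 x (B.1 x) (A.1 x),
      sym2 hB.1 x (C.1 x) (A.1 x), sym2 hB.1 x (C.1 x) (B.1 x), sym2 hB.1 x (B.1 x) (A.1 x),
      sym2 hC.1 x (C.1 x) (A.1 x), sym2 hC.1 x (C.1 x) (B.1 x), sym2 hC.1 x (B.1 x) (A.1 x),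
      sym2' hA.2 x (A.1 x) v, sym2' hA.2 x (B.1 x) v, sym2' hA.2 x (C.1 x) v,
      sym2' hB.2 x (A.1 x) v, sym2' hB.2 x (B.1 x) v, sym2' hB.2 x (C.1 x) v,
      sym2' hC.2 x (A.1 x) v, sym2' hC.2 x (B.1 x) v, sym2' hC.2 x (C.1 x) v,
      sym2' hA.2 x (C.1 x) (A.1 x), sym2' hA.2 x (C.1 x) (B.1 x), sym2' hA.2 x (B.1 x) (A.1 x),
      sym2' hB.2 x (C.1 x) (A.1 x), sym2' hB.2 x (C.1 x) (B.1 x), sym2' hB.2 x (B.1 x) (A.1 x),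
      sym2' hC.2 x (C.1 x) (A.1 x), sym2' hC.2 x (C.1 x) (B.1 x), sym2' hC.2 x (B.1 x) (A.1 x)]
    ring

end
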